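/- The volume function of an ideal hyperbolic tetrahedron is strictly concave in its free angle parameters: the function f(α, β) = Λ(α) + Λ(β) + Λ(π - α - β) is strictly concave on the open convex region {(α, β) ∈ ℝ² : α > 0, β > 0, α + β < π}. -/

import Mathlib

/-!
Since `Λ' θ = -log |2 sin θ|` and `Λ'' θ = -cot θ` on `(0, π)`, along a line with direction
`(u, v, w)`, `u + v + w = 0`, through angles `α + β + γ = π` the volume has second derivative
`-(u² cot α + v² cot β + w² cot γ)`. From `cot α cot β + cot β cot γ + cot γ cot α = 1` and
`cot α + cot γ > 0` this quadratic form is positive definite on the plane `u + v + w = 0`.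
-/

open MeasureTheory Real

/-- The Lobachevsky function `Λ(θ) = -∫₀^θ log |2 sin t| dt`. -/
noncomputable def lobachevsky (θ : ℝ) : ℝ :=
  -∫ t in (0:ℝ)..θ, Real.log |2 * Real.sin t|

open Set AffineMap

theorem strictConcaveOn_of_forall_lineMap {𝕜 E β : Type*} [Ring 𝕜] [PartialOrder 𝕜]
    [Nontrivial 𝕜] [AddCommGroup E] [Module 𝕜 E] [AddCommMonoid β] [PartialOrder β] [SMul 𝕜 β]
    {s : Set E} {f : E → β} (hs : Convex 𝕜 s)
    (h : ∀ x ∈ s, ∀ y ∈ s, x ≠ y →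
      StrictConcaveOn 𝕜 (lineMap (k := 𝕜) x y ⁻¹' s) (f ∘ lineMap x y)) :
    StrictConcaveOn 𝕜 s f := by
  refine ⟨hs, fun x hx y hy hxy a b ha hb hab => ?_⟩
  have := (h x hx y hy hxy).2 (x := 0) (by simpa) (y := 1) (by simpa) zero_ne_one ha hb hab
  obtain rfl : a = 1 - b := eq_sub_of_add_eq hab
  simpa [lineMap_apply_module] using this

theorem strictConcaveOn_of_hasDerivAt2_neg {D : Set ℝ} (hD : Convex ℝ D) (hDo : IsOpen D)
    {f f' f'' : ℝ → ℝ} (hf : ∀ x ∈ D, HasDerivAt f (f' x) x)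
    (hf' : ∀ x ∈ D, HasDerivAt f' (f'' x) x) (hf'' : ∀ x ∈ D, f'' x < 0) :
    StrictConcaveOn ℝ D f := by
  have hanti : StrictAntiOn f' D := strictAntiOn_of_deriv_neg hD
    (fun x hx => (hf' x hx).continuousAt.continuousWithinAt)
    (fun x hx => by
      rw [hDo.interior_eq] at hx
      rw [(hf' x hx).deriv]
      exact hf'' x hx)
  refine StrictAntiOn.strictConcaveOn_of_deriv hD
    (fun x hx => (hf x hx).continuousAt.continuousWithinAt) ?_
  rw [hDo.interior_eq]
  exact hanti.congr fun x hx => (hf x hx).deriv.symm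

theorem HasDerivAt.comp_const_add_mul {φ : ℝ → ℝ} {φ' a u t : ℝ}
    (hφ : HasDerivAt φ φ' (a + t * u)) : HasDerivAt (fun s => φ (a + s * u)) (φ' * u) t :=
  hφ.comp t ((hasDerivAt_mul_const u).const_add a)

theorem intervalIntegrable_log_abs_two_mul_sin (a b : ℝ) :
    IntervalIntegrable (fun t => log |2 * sin t|) volume a b := by
  simpa using (analyticOnNhd_const.mul analyticOnNhd_sin).meromorphicOn.intervalIntegrable_log_norm
    (a := a) (b := b) (f := fun t => 2 * sin t)

theorem hasDerivAt_lobachevsky {θ : ℝ} (hθ : sin θ ≠ 0) :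
    HasDerivAt lobachevsky (-log |2 * sin θ|) θ := by
  have hcont : ContinuousAt (fun t => log |2 * sin t|) θ :=
    (continuous_const.mul continuous_sin).abs.continuousAt.log (by simpa using hθ)
  have hmeas : Measurable fun t => log |2 * sin t| := by fun_prop
  exact (intervalIntegral.integral_hasDerivAt_right (intervalIntegrable_log_abs_two_mul_sin 0 θ)
    hmeas.aestronglyMeasurable.stronglyMeasurableAtFilter hcont).neg

theorem hasDerivAt_log_abs_two_mul_sin {θ : ℝ} (hθ : sin θ ≠ 0) :
    HasDerivAt (fun t => log |2 * sin t|) (cot θ) θ := by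
  simp only [log_abs]
  convert ((hasDerivAt_sin θ).const_mul 2).log (mul_ne_zero two_ne_zero hθ) using 1
  rw [cot_eq_cos_div_sin, mul_div_mul_left _ _ two_ne_zero]

theorem cot_add_cot_pos {α γ : ℝ} (hα : 0 < α) (hγ : 0 < γ) (hαγ : α + γ < π) :
    0 < cot α + cot γ := by
  have hsα := sin_pos_of_pos_of_lt_pi hα (by linarith)
  have hsγ := sin_pos_of_pos_of_lt_pi hγ (by linarith)
  have hsum : cot α + cot γ = sin (α + γ) / (sin α * sin γ) := by
    rw [cot_eq_cos_div_sin, cot_eq_cos_div_sin, sin_add]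
    field_simp
    ring
  rw [hsum]
  exact div_pos (sin_pos_of_pos_of_lt_pi (by linarith) hαγ) (mul_pos hsα hsγ)

theorem cot_mul_cot_add_cot_mul_cot_add_cot_mul_cot_eq_one {α β γ : ℝ} (hsum : α + β + γ = π)
    (hα : sin α ≠ 0) (hβ : sin β ≠ 0) (hγ : sin γ ≠ 0) :
    cot α * cot β + cot β * cot γ + cot γ * cot α = 1 := by
  obtain rfl : γ = π - (α + β) := by linarith
  rw [sin_pi_sub, sin_add] at hγ
  simp only [cot_eq_cos_div_sin, sin_pi_sub, cos_pi_sub, sin_add, cos_add]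
  field_simp
  ring

theorem quadratic_form_pos_of_add_add_eq_zero {x y z u v w : ℝ} (hxz : 0 < x + z)
    (hdet : 0 < x * y + y * z + z * x) (huvw : u + v + w = 0) (huv : u ≠ 0 ∨ v ≠ 0) :
    0 < u ^ 2 * x + v ^ 2 * y + w ^ 2 * z := by
  have hw : w = -(u + v) := by linarith
  have key : (x + z) * (u ^ 2 * x + v ^ 2 * y + w ^ 2 * z)
      = ((x + z) * u + z * v) ^ 2 + (x * y + y * z + z * x) * v ^ 2 := by
    rw [hw]
    ring
  refine pos_of_mul_pos_right (key ▸ ?_) hxz.le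
  rcases eq_or_ne v 0 with rfl | hv
  · have hu : u ≠ 0 := by simpa using huv
    simpa using sq_pos_of_ne_zero (mul_ne_zero hxz.ne' hu)
  · exact add_pos_of_nonneg_of_pos (sq_nonneg _) (mul_pos hdet (sq_pos_of_ne_zero hv))

theorem strictConcaveOn_lobachevsky_add_add {D : Set ℝ} (hD : Convex ℝ D) (hDo : IsOpen D)
    {a b c u v w : ℝ} (habc : a + b + c = π) (huvw : u + v + w = 0) (huv : u ≠ 0 ∨ v ≠ 0)
    (hpos : ∀ t ∈ D, 0 < a + t * u ∧ 0 < b + t * v ∧ 0 < c + t * w) :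
    StrictConcaveOn ℝ D fun t =>
      lobachevsky (a + t * u) + lobachevsky (b + t * v) + lobachevsky (c + t * w) := by
  have hsum (t : ℝ) : (a + t * u) + (b + t * v) + (c + t * w) = π := by
    linear_combination habc + t * huvw
  have hsin (t : ℝ) (ht : t ∈ D) :
      sin (a + t * u) ≠ 0 ∧ sin (b + t * v) ≠ 0 ∧ sin (c + t * w) ≠ 0 := by
    obtain ⟨h₁, h₂, h₃⟩ := hpos t ht
    have := hsum t
    exact ⟨(sin_pos_of_pos_of_lt_pi h₁ (by linarith)).ne',
      (sin_pos_of_pos_of_lt_pi h₂ (by linarith)).ne',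
      (sin_pos_of_pos_of_lt_pi h₃ (by linarith)).ne'⟩
  refine strictConcaveOn_of_hasDerivAt2_neg hD hDo
    (f' := fun t => -log |2 * sin (a + t * u)| * u + -log |2 * sin (b + t * v)| * v
      + -log |2 * sin (c + t * w)| * w)
    (f'' := fun t => -(cot (a + t * u) * u) * u + -(cot (b + t * v) * v) * v
      + -(cot (c + t * w) * w) * w) ?_ ?_ ?_
  · intro t ht
    obtain ⟨h₁, h₂, h₃⟩ := hsin t ht
    exact ((hasDerivAt_lobachevsky h₁).comp_const_add_mul.add
      (hasDerivAt_lobachevsky h₂).comp_const_add_mul).add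
      (hasDerivAt_lobachevsky h₃).comp_const_add_mul
  · intro t ht
    obtain ⟨h₁, h₂, h₃⟩ := hsin t ht
    exact (((hasDerivAt_log_abs_two_mul_sin h₁).comp_const_add_mul.neg.mul_const u).add
      ((hasDerivAt_log_abs_two_mul_sin h₂).comp_const_add_mul.neg.mul_const v)).add
      ((hasDerivAt_log_abs_two_mul_sin h₃).comp_const_add_mul.neg.mul_const w)
  · intro t ht
    obtain ⟨h₁, -, h₃⟩ := hpos t ht
    obtain ⟨hs₁, hs₂, hs₃⟩ := hsin t ht
    have hcot := cot_mul_cot_add_cot_mul_cot_add_cot_mul_cot_eq_one (hsum t) hs₁ hs₂ hs₃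
    have hQ := quadratic_form_pos_of_add_add_eq_zero
      (cot_add_cot_pos h₁ h₃ (by linarith [hsum t, hpos t ht])) (hcot ▸ one_pos) huvw huv
    linarith

def dihedralAngleDomain : Set (ℝ × ℝ) := {p | 0 < p.1 ∧ 0 < p.2 ∧ p.1 + p.2 < π}

theorem isOpen_dihedralAngleDomain : IsOpen dihedralAngleDomain :=
  (isOpen_lt continuous_const continuous_fst).and <|
    (isOpen_lt continuous_const continuous_snd).and
      (isOpen_lt (continuous_fst.add continuous_snd) continuous_const)

theorem convex_dihedralAngleDomain : Convex ℝ dihedralAngleDomain :=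
  (convex_halfSpace_gt (LinearMap.fst ℝ ℝ ℝ).isLinear 0).inter <|
    (convex_halfSpace_gt (LinearMap.snd ℝ ℝ ℝ).isLinear 0).inter
      (convex_halfSpace_lt (LinearMap.fst ℝ ℝ ℝ + LinearMap.snd ℝ ℝ ℝ).isLinear π)

noncomputable def idealTetrahedronVolume (p : ℝ × ℝ) : ℝ :=
  lobachevsky p.1 + lobachevsky p.2 + lobachevsky (π - p.1 - p.2)

theorem idealTetrahedronVolume_comp_lineMap (p q : ℝ × ℝ) :
    idealTetrahedronVolume ∘ lineMap (k := ℝ) p q = fun t =>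
      lobachevsky (p.1 + t * (q.1 - p.1)) + lobachevsky (p.2 + t * (q.2 - p.2))
        + lobachevsky (π - p.1 - p.2 + t * (p.1 + p.2 - q.1 - q.2)) := by
  funext t
  simp only [Function.comp_apply, idealTetrahedronVolume, fst_lineMap, snd_lineMap,
    lineMap_apply_ring']
  ring_nf

theorem strictConcaveOn_idealTetrahedronVolume_comp_lineMap {p q : ℝ × ℝ} (hpq : p ≠ q) :
    StrictConcaveOn ℝ (lineMap (k := ℝ) p q ⁻¹' dihedralAngleDomain)
      (idealTetrahedronVolume ∘ lineMap p q) := by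
  have hne : q.1 - p.1 ≠ 0 ∨ q.2 - p.2 ≠ 0 := by
    by_contra! h
    exact hpq (Prod.ext (by linarith [h.1]) (by linarith [h.2])).symm
  rw [idealTetrahedronVolume_comp_lineMap]
  refine strictConcaveOn_lobachevsky_add_add
    (convex_dihedralAngleDomain.affine_preimage (lineMap p q))
    (isOpen_dihedralAngleDomain.preimage lineMap_continuous) (by ring) (by ring) hne ?_
  intro t ht
  simp only [mem_preimage, fst_lineMap, snd_lineMap, lineMap_apply_ring', dihedralAngleDomain,
    mem_ofPred_eq] at ht
  exact ⟨by linarith [ht.1], by linarith [ht.2.1], by linarith [ht.2.2]⟩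

/-- The volume function of an ideal tetrahedron, f(α, β) = Λ(α) + Λ(β) + Λ(π - α - β),
is strictly concave on the open triangle {α > 0, β > 0, α + β < π}. -/
theorem idealTetrahedronVolume_strictConcaveOn :
    StrictConcaveOn ℝ
      {p : ℝ × ℝ | 0 < p.1 ∧ 0 < p.2 ∧ p.1 + p.2 < Real.pi}
      (fun p : ℝ × ℝ =>
        lobachevsky p.1 + lobachevsky p.2 + lobachevsky (Real.pi - p.1 - p.2)) :=
  strictConcaveOn_of_forall_lineMap convex_dihedralAngleDomain fun _ _ _ _ hpq =>
    strictConcaveOn_idealTetrahedronVolume_comp_lineMap hpq
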